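/- Let n ∈ ℕ, A ∈ Mₙ(ℝ) and α̂ ∈ (0,1]ⁿ. Suppose that σ_{α̂}(A) ⊆ ℂ₋ and that λ_min(−(A + Aᵀ)) > 0, where λ_min(−(A + Aᵀ)) is the smallest eigenvalue of the real symmetric matrix −(A + Aᵀ). Then δ²_{α̂}(A) ≥ (1/2)·λ_min(−(A + Aᵀ)) > 0. -/

import Mathlib

/-- The matrix `diag(z^{α₁},…,z^{αₙ}) - M`, with complex powers in the principal branch
(`Complex.cpow`, whose argument lies in `(-π, π]`). -/
noncomputable def fracMat {n : ℕ} (α : Fin n → ℝ) (M : Matrix (Fin n) (Fin n) ℂ) (z : ℂ) :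
    Matrix (Fin n) (Fin n) ℂ :=
  Matrix.diagonal (fun i => z ^ (α i : ℂ)) - M

/-- The `α`-order spectrum of a (complex) matrix `M`. -/
noncomputable def fracSpec {n : ℕ} (α : Fin n → ℝ) (M : Matrix (Fin n) (Fin n) ℂ) : Set ℂ :=
  {z : ℂ | (fracMat α M z).det = 0}

/-- Matrix operator norm induced by a vector norm `N`. -/
noncomputable def matOpNorm {n : ℕ} (N : (Fin n → ℂ) → ℝ) (M : Matrix (Fin n) (Fin n) ℂ) : ℝ :=
  sSup {t : ℝ | ∃ v : Fin n → ℂ, N v = 1 ∧ t = N (M.mulVec v)}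

/-- `‖M⁻¹‖⁻¹` with the convention that it equals `0` iff `det M = 0`. -/
noncomputable def resInvNorm {n : ℕ} (N : (Fin n → ℂ) → ℝ) (M : Matrix (Fin n) (Fin n) ℂ) : ℝ :=
  if M.det = 0 then 0 else (matOpNorm N M⁻¹)⁻¹

/-- The `α`-order `ε`-pseudospectrum w.r.t. the vector norm `N`. -/
noncomputable def pseudoSpec {n : ℕ} (N : (Fin n → ℂ) → ℝ) (α : Fin n → ℝ) (ε : ℝ)
    (M : Matrix (Fin n) (Fin n) ℂ) : Set ℂ :=
  {z : ℂ | resInvNorm N (fracMat α M z) ≤ ε}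

/-- The Euclidean norm on `Fin n → ℂ`. -/
noncomputable def eucNorm {n : ℕ} (v : Fin n → ℂ) : ℝ :=
  Real.sqrt (∑ i, ‖v i‖ ^ 2)

/-- The matrix norm `‖·‖₂` induced by the Euclidean norm. -/
noncomputable def l2OpNorm {n : ℕ} (M : Matrix (Fin n) (Fin n) ℂ) : ℝ :=
  matOpNorm eucNorm M

/-- The `α`-order `ε`-pseudospectrum `σ²_{α,ε}` w.r.t. the Euclidean norm. -/
noncomputable def pseudoSpec2 {n : ℕ} (α : Fin n → ℝ) (ε : ℝ)
    (M : Matrix (Fin n) (Fin n) ℂ) : Set ℂ :=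
  pseudoSpec eucNorm α ε M

/-- `δ²_{α}(A) := inf{‖E‖₂ : E ∈ Mₙ(ℂ), σ_α(A+E) ∩ ℂ_{≥0} ≠ ∅}`. -/
noncomputable def delta2 {n : ℕ} (α : Fin n → ℝ) (A : Matrix (Fin n) (Fin n) ℝ) : ℝ :=
  sInf {r : ℝ | ∃ E : Matrix (Fin n) (Fin n) ℂ, l2OpNorm E = r ∧
    ∃ z ∈ fracSpec α (A.map (fun a => (a : ℂ)) + E), 0 ≤ z.re}

/-- `β̂` is an `ε`-rational approximation of `α̂` associated with `A` (Definition 4.1):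
(i) each `β_i` is rational with `0 < β_i ≤ α_i ≤ 1`;
(ii) some `R ≥ 1` excludes both Euclidean `ε`-pseudospectra from `{|z| > R}`;
(iii) some `ρ ∈ (0,1)` excludes both spectra from `{|z| < ρ}`;
(iv) for these `R, ρ`: `sup_{ρ ≤ |z| ≤ R} |z^{α_i} − z^{β_i}| < ε` for all `i`. -/
def IsRatApprox {n : ℕ} (A : Matrix (Fin n) (Fin n) ℝ) (α : Fin n → ℝ) (ε : ℝ)
    (β : Fin n → ℝ) : Prop :=
  (∀ i, ∃ r : ℚ, (r : ℝ) = β i) ∧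
  (∀ i, 0 < β i ∧ β i ≤ α i ∧ α i ≤ 1) ∧
  ∃ R : ℝ, 1 ≤ R ∧ ∃ ρ : ℝ, ρ ∈ Set.Ioo (0 : ℝ) 1 ∧
    pseudoSpec2 α ε (A.map (fun a => (a : ℂ))) ∩ {z : ℂ | R < ‖z‖} = ∅ ∧
    pseudoSpec2 β ε (A.map (fun a => (a : ℂ))) ∩ {z : ℂ | R < ‖z‖} = ∅ ∧
    fracSpec α (A.map (fun a => (a : ℂ))) ∩ {z : ℂ | ‖z‖ < ρ} = ∅ ∧
    fracSpec β (A.map (fun a => (a : ℂ))) ∩ {z : ℂ | ‖z‖ < ρ} = ∅ ∧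
    ∀ i, sSup {t : ℝ | ∃ z : ℂ, ρ ≤ ‖z‖ ∧ ‖z‖ ≤ R ∧
      t = ‖z ^ (α i : ℂ) - z ^ (β i : ℂ)‖} < ε

/-! If `Re z ≥ 0` and `(z^α̂ I − A − E) v = 0` with `v ≠ 0`, take real parts of `v* (·) v`.
The diagonal term `∑ Re(z^{αᵢ}) |vᵢ|²` is nonnegative, because `|arg z| ≤ π/2` and `αᵢ ≤ 1` give
`|arg z^{αᵢ}| ≤ π/2`. Since `A` is real, `Re (v* A v)` splits into the quadratic forms of `A` at
`Re v` and `Im v`, each bounded by `−(λ/2)` times the squared norm through the Rayleigh bound for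
the symmetric matrix `−(A + Aᵀ)`. Finally `Re (v* E v) ≤ ‖E‖₂ |v|²`, so `‖E‖₂ ≥ λ/2`. -/

open Matrix

theorem eucNorm_eq_norm_toLp {n : ℕ} (v : Fin n → ℂ) : eucNorm v = ‖WithLp.toLp 2 v‖ := by
  rw [EuclideanSpace.norm_eq]; rfl

theorem l2OpNorm_eq_norm_toEuclideanCLM {n : ℕ} (M : Matrix (Fin n) (Fin n) ℂ) :
    l2OpNorm M = ‖toEuclideanCLM (n := Fin n) (𝕜 := ℂ) M‖ := by
  rw [← ContinuousLinearMap.sSup_sphere_eq_norm]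
  unfold l2OpNorm matOpNorm
  congr 1
  ext t
  simp only [eucNorm_eq_norm_toLp, Set.mem_ofPred_eq, Set.mem_image, mem_sphere_zero_iff_norm]
  constructor
  · rintro ⟨v, hv, rfl⟩
    exact ⟨WithLp.toLp 2 v, hv, rfl⟩
  · rintro ⟨x, hx, rfl⟩
    exact ⟨WithLp.ofLp x, hx, rfl⟩

theorem re_star_dotProduct_mulVec_le_l2OpNorm {n : ℕ} (M : Matrix (Fin n) (Fin n) ℂ)
    (v : Fin n → ℂ) : (star v ⬝ᵥ M *ᵥ v).re ≤ l2OpNorm M * ∑ i, ‖v i‖ ^ 2 := by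
  set T := toEuclideanCLM (n := Fin n) (𝕜 := ℂ) M
  set x := WithLp.toLp 2 v
  have hinner : star v ⬝ᵥ M *ᵥ v = inner ℂ x (T x) := by
    rw [toEuclideanCLM_toLp, EuclideanSpace.inner_toLp_toLp, dotProduct_comm]
  calc (star v ⬝ᵥ M *ᵥ v).re
      ≤ ‖x‖ * ‖T x‖ := by rw [hinner]; exact re_inner_le_norm (𝕜 := ℂ) _ _
    _ ≤ ‖x‖ * (‖T‖ * ‖x‖) := by gcongr; exact T.le_opNorm x
    _ = l2OpNorm M * ∑ i, ‖v i‖ ^ 2 := by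
        rw [l2OpNorm_eq_norm_toEuclideanCLM, ← EuclideanSpace.norm_sq_eq]; ring

namespace Matrix

variable {ι : Type*} [Fintype ι]

theorem IsSymm.mul_dotProduct_self_le [DecidableEq ι] {S : Matrix ι ι ℝ} (hS : S.IsSymm) {c : ℝ}
    (hc : ∀ μ : ℝ, (∃ v : ι → ℝ, v ≠ 0 ∧ S *ᵥ v = μ • v) → c ≤ μ) (x : ι → ℝ) :
    c * (x ⬝ᵥ x) ≤ x ⬝ᵥ S *ᵥ x := by
  have hT : (S - c • 1).IsHermitian := by
    simpa [isHermitian_iff_isSymm] using hS.sub (isSymm_one.smul c)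
  have heig : 0 ≤ hT.eigenvalues := fun i => by
    let w : ι → ℝ := hT.eigenvectorBasis i
    have hw : w ≠ 0 := by simpa [w] using hT.eigenvectorBasis.orthonormal.ne_zero i
    have hSw : S *ᵥ w = (hT.eigenvalues i + c) • w := by
      have := hT.mulVec_eigenvectorBasis i
      rw [sub_mulVec, smul_mulVec, one_mulVec, sub_eq_iff_eq_add] at this
      rw [add_smul, ← this]
    simpa using hc _ ⟨w, hw, hSw⟩
  have := (hT.posSemidef_iff_eigenvalues_nonneg.mpr heig).dotProduct_mulVec_nonneg x
  simpa [sub_mulVec, smul_mulVec, dotProduct_sub, dotProduct_smul] using this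

theorem dotProduct_transpose_mulVec_self {R : Type*} [CommSemiring R]
    (A : Matrix ι ι R) (x : ι → R) : x ⬝ᵥ Aᵀ *ᵥ x = x ⬝ᵥ A *ᵥ x := by
  rw [dotProduct_mulVec, vecMul_transpose, dotProduct_comm]

theorem re_star_dotProduct_map_ofReal_mulVec (A : Matrix ι ι ℝ) (v : ι → ℂ) :
    (star v ⬝ᵥ A.map (fun a => (a : ℂ)) *ᵥ v).re =
      (Complex.re ∘ v) ⬝ᵥ A *ᵥ (Complex.re ∘ v) + (Complex.im ∘ v) ⬝ᵥ A *ᵥ (Complex.im ∘ v) := by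
  simp only [dotProduct, mulVec, Complex.re_sum, Finset.mul_sum, ← Finset.sum_add_distrib]
  refine Finset.sum_congr rfl fun i _ => Finset.sum_congr rfl fun j _ => ?_
  simp only [Pi.star_apply, Complex.star_def, map_apply, Function.comp_apply, Complex.mul_re,
    Complex.mul_im, Complex.conj_re, Complex.conj_im, Complex.ofReal_re, Complex.ofReal_im]
  ring

theorem dotProduct_mulVec_self_le_neg_half_mul [DecidableEq ι] {A : Matrix ι ι ℝ} {c : ℝ}
    (hc : ∀ μ : ℝ, (∃ v : ι → ℝ, v ≠ 0 ∧ (-(A + Aᵀ)) *ᵥ v = μ • v) → c ≤ μ) (x : ι → ℝ) :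
    x ⬝ᵥ A *ᵥ x ≤ -(c / 2) * (x ⬝ᵥ x) := by
  have hsymm : (-(A + Aᵀ)).IsSymm := (isSymm_add_transpose_self A).neg
  have := hsymm.mul_dotProduct_self_le hc x
  rw [neg_mulVec, add_mulVec, dotProduct_neg, dotProduct_add,
    dotProduct_transpose_mulVec_self] at this
  linarith

theorem re_star_dotProduct_map_ofReal_mulVec_le_neg_half_mul [DecidableEq ι]
    {A : Matrix ι ι ℝ} {c : ℝ}
    (hc : ∀ μ : ℝ, (∃ v : ι → ℝ, v ≠ 0 ∧ (-(A + Aᵀ)) *ᵥ v = μ • v) → c ≤ μ) (v : ι → ℂ) :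
    (star v ⬝ᵥ A.map (fun a => (a : ℂ)) *ᵥ v).re ≤ -(c / 2) * ∑ i, ‖v i‖ ^ 2 := by
  have hnorm : ∑ i, ‖v i‖ ^ 2 =
      (Complex.re ∘ v) ⬝ᵥ (Complex.re ∘ v) + (Complex.im ∘ v) ⬝ᵥ (Complex.im ∘ v) := by
    simp only [dotProduct, ← Finset.sum_add_distrib, Complex.sq_norm, Complex.normSq_apply,
      Function.comp_apply]
  rw [re_star_dotProduct_map_ofReal_mulVec, hnorm, mul_add]
  exact add_le_add (dotProduct_mulVec_self_le_neg_half_mul hc _)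
    (dotProduct_mulVec_self_le_neg_half_mul hc _)

theorem re_star_dotProduct_diagonal_mulVec [DecidableEq ι] (d v : ι → ℂ) :
    (star v ⬝ᵥ diagonal d *ᵥ v).re = ∑ i, (d i).re * ‖v i‖ ^ 2 := by
  simp only [dotProduct, mulVec_diagonal, Complex.re_sum, Pi.star_apply, Complex.star_def]
  refine Finset.sum_congr rfl fun i _ => ?_
  rw [mul_left_comm, ← Complex.normSq_eq_conj_mul_self, Complex.re_mul_ofReal,
    Complex.normSq_eq_norm_sq]

end Matrix

theorem Complex.re_cpow_ofReal_nonneg {z : ℂ} (hz : 0 ≤ z.re) {a : ℝ} (ha₀ : 0 ≤ a)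
    (ha₁ : a ≤ 1) : 0 ≤ (z ^ (a : ℂ)).re := by
  rw [cpow_ofReal_re]
  refine mul_nonneg (by positivity) (Real.cos_nonneg_of_neg_pi_div_two_le_of_le ?_ ?_) <;>
  · have := abs_le.mp (abs_arg_le_pi_div_two_iff.mpr hz)
    nlinarith [Real.pi_pos]

theorem one_mem_fracSpec_add_one_sub {n : ℕ} [Nonempty (Fin n)] (α : Fin n → ℝ)
    (M : Matrix (Fin n) (Fin n) ℂ) : (1 : ℂ) ∈ fracSpec α (M + (1 - M)) := by
  simp [fracSpec, fracMat, Complex.one_cpow]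

theorem half_le_l2OpNorm_of_mem_fracSpec {n : ℕ} {A : Matrix (Fin n) (Fin n) ℝ}
    {α : Fin n → ℝ} (hα : ∀ i, α i ∈ Set.Icc (0 : ℝ) 1) {c : ℝ}
    (hc : ∀ μ : ℝ, (∃ v : Fin n → ℝ, v ≠ 0 ∧ (-(A + Aᵀ)) *ᵥ v = μ • v) → c ≤ μ)
    {E : Matrix (Fin n) (Fin n) ℂ} {z : ℂ} (hz : z ∈ fracSpec α (A.map (fun a => (a : ℂ)) + E))
    (hz_re : 0 ≤ z.re) : c / 2 ≤ l2OpNorm E := by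
  obtain ⟨v, hv, hker⟩ := exists_mulVec_eq_zero_iff.mpr hz
  have heq : diagonal (fun i => z ^ (α i : ℂ)) *ᵥ v = A.map (fun a => (a : ℂ)) *ᵥ v + E *ᵥ v := by
    rwa [fracMat, sub_mulVec, sub_eq_zero, add_mulVec] at hker
  have hpos : 0 < ∑ i, ‖v i‖ ^ 2 := by
    obtain ⟨i, hi⟩ := Function.ne_iff.mp hv
    exact Finset.sum_pos' (fun _ _ => by positivity) ⟨i, Finset.mem_univ i, by positivity⟩
  have hdiag : 0 ≤ (star v ⬝ᵥ diagonal (fun i => z ^ (α i : ℂ)) *ᵥ v).re := by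
    rw [re_star_dotProduct_diagonal_mulVec]
    exact Finset.sum_nonneg fun i _ =>
      mul_nonneg (Complex.re_cpow_ofReal_nonneg hz_re (hα i).1 (hα i).2) (by positivity)
  rw [heq, dotProduct_add, Complex.add_re] at hdiag
  have hA := re_star_dotProduct_map_ofReal_mulVec_le_neg_half_mul hc v
  have hE := re_star_dotProduct_mulVec_le_l2OpNorm E v
  nlinarith

theorem delta2_ge_half_lambda_min_general
    {n : ℕ} (A : Matrix (Fin n) (Fin n) ℝ) (α : Fin n → ℝ)
    (hα : ∀ i, α i ∈ Set.Ioc (0 : ℝ) 1)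
    (lam : ℝ)
    (hlam_eig : ∃ v : Fin n → ℝ, v ≠ 0 ∧ (-(A + A.transpose)).mulVec v = lam • v)
    (hlam_min : ∀ μ : ℝ, (∃ v : Fin n → ℝ, v ≠ 0 ∧ (-(A + A.transpose)).mulVec v = μ • v) →
      lam ≤ μ)
    (hlam_pos : 0 < lam) :
    delta2 α A ≥ lam / 2 ∧ 0 < lam / 2 := by
  obtain ⟨v, hv, -⟩ := hlam_eig
  obtain ⟨i, -⟩ := Function.ne_iff.mp hv
  -- for `n = 0` the set defining `delta2` is empty and `delta2 α A = sInf ∅ = 0`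
  have : Nonempty (Fin n) := ⟨i⟩
  refine ⟨le_csInf ⟨_, _, rfl, 1, one_mem_fracSpec_add_one_sub α _, zero_le_one⟩ ?_,
    half_pos hlam_pos⟩
  rintro _ ⟨E, rfl, z, hz, hz_re⟩
  exact half_le_l2OpNorm_of_mem_fracSpec (fun i => Set.Ioc_subset_Icc_self (hα i)) hlam_min hz
    hz_re

/-- Proposition 4.2: if `σ_{α̂}(A) ⊆ ℂ₋` and the smallest eigenvalue `λ` of
the real symmetric matrix `−(A + Aᵀ)` is positive, then `δ²_{α̂}(A) ≥ λ/2 > 0`. -/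
theorem delta2_ge_half_lambda_min
    {n : ℕ} (A : Matrix (Fin n) (Fin n) ℝ) (α : Fin n → ℝ)
    (hα : ∀ i, α i ∈ Set.Ioc (0 : ℝ) 1)
    (hspec : fracSpec α (A.map (fun a => (a : ℂ))) ⊆ {z : ℂ | z.re < 0})
    (lam : ℝ)
    (hlam_eig : ∃ v : Fin n → ℝ, v ≠ 0 ∧ (-(A + A.transpose)).mulVec v = lam • v)
    (hlam_min : ∀ μ : ℝ, (∃ v : Fin n → ℝ, v ≠ 0 ∧ (-(A + A.transpose)).mulVec v = μ • v) →
      lam ≤ μ)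
    (hlam_pos : 0 < lam) :
    delta2 α A ≥ lam / 2 ∧ 0 < lam / 2 :=
  delta2_ge_half_lambda_min_general A α hα lam hlam_eig hlam_min hlam_pos
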